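/- arXiv:1910.04057 — 4 statements merged into one kernel-verified Lean document; each statement's English description precedes it below -/
import Mathlib

section
/- In the SVRG setup, for s = (s_1,…,s_n) ∈ S define ȳ(s) := (1/n)∑_{i=1}^n v_{i,s_i}, and let h := (1/n)∑_{i=1}^n ∇f_i(x_i) and f := (1/n)∑_{i=1}^n f_i. Then for every α ∈ ℝ and every x⋆ ∈ ℝ^p: (1/|S|)∑_{s∈S} ‖x̄ − αȳ(s) − x⋆‖² = ‖x̄ − α∇f(x̄) − x⋆‖² + 2α⟨x̄ − α∇f(x̄) − x⋆, ∇f(x̄) − h⟩ + α²‖∇f(x̄) − h‖² + (α²/n²)∑_{i=1}^n (1/m_i)∑_{j=1}^{m_i} ‖v_{i,j} − ∇f_i(x_i)‖². -/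
/-!
Write the step as `x̄ - α ȳ(s) - x⋆ = B + ∑ᵢ wᵢ(sᵢ)` with `B := x̄ - α h - x⋆` and
`wᵢⱼ := -(α/n) (vᵢⱼ - ∇fᵢ(xᵢ))`. The SVRG correction is unbiased, so each `wᵢ` averages to zero
over its own index; as the indices are independent, the cross terms of `‖B + ∑ᵢ wᵢ(sᵢ)‖²` average
out and leave `‖B‖² + ∑ᵢ E‖wᵢ‖²`. Re-centering `B` at `x̄ - α ∇f(x̄) - x⋆` gives the first three
terms.
-/

open RealInnerProductSpace

section PiSum

variable {ι : Type*} [Fintype ι] [DecidableEq ι] {β : ι → Type*} [∀ i, Fintype (β i)]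

theorem Fintype.sum_pi_eq_sum_sum_piSplitAt {M : Type*} [AddCommMonoid M] (i : ι)
    (g : (∀ k, β k) → M) :
    ∑ s, g s = ∑ j : β i, ∑ t : ∀ k : {k // k ≠ i}, β k, g ((Equiv.piSplitAt i β).symm (j, t)) := by
  rw [← Equiv.sum_comp (Equiv.piSplitAt i β).symm g, Fintype.sum_prod_type]

theorem Fintype.sum_pi_apply_eq_card_div_smul {V : Type*} [AddCommGroup V] [Module ℝ V] (i : ι)
    (g : β i → V) :
    ∑ s : ∀ k, β k, g (s i) = ((card (∀ k, β k) : ℝ) / card (β i)) • ∑ j, g j := by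
  rw [sum_pi_eq_sum_sum_piSplitAt i, card_congr (Equiv.piSplitAt i β), card_prod]
  simp only [Equiv.piSplitAt_symm_apply, dite_true, Finset.sum_const, Finset.card_univ,
    ← Finset.smul_sum]
  rcases eq_or_ne (card (β i)) 0 with h | h
  · have := card_eq_zero_iff.mp h
    simp
  · rw [Nat.cast_mul, mul_div_cancel_left₀ _ (Nat.cast_ne_zero.mpr h), Nat.cast_smul_eq_nsmul]

theorem Fintype.sum_pi_apply_apply_eq_zero {M : Type*} [AddCommMonoid M] {i k : ι} (hki : k ≠ i)
    (F : β i → β k → M) (hF : ∀ y, ∑ x, F x y = 0) :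
    ∑ s : ∀ l, β l, F (s i) (s k) = 0 := by
  rw [sum_pi_eq_sum_sum_piSplitAt i, Finset.sum_comm]
  simp [Equiv.piSplitAt_symm_apply, hki, hF]

variable {V : Type*} [NormedAddCommGroup V] [InnerProductSpace ℝ V]

theorem Fintype.sum_pi_norm_add_sum_apply_sq (b : V) (u : ∀ i, β i → V)
    (hu : ∀ i, ∑ j, u i j = 0) :
    ∑ s : ∀ i, β i, ‖b + ∑ i, u i (s i)‖ ^ 2 =
      card (∀ i, β i) * ‖b‖ ^ 2 +
        ∑ i, ((card (∀ i, β i) : ℝ) / card (β i)) * ∑ j, ‖u i j‖ ^ 2 := by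
  have linear (i : ι) : ∑ s : ∀ i, β i, ⟪b, u i (s i)⟫ = 0 := by
    rw [sum_pi_apply_eq_card_div_smul i fun j => ⟪b, u i j⟫, ← inner_sum, hu, inner_zero_right,
      smul_zero]
  have cross (i k : ι) (hki : k ≠ i) : ∑ s : ∀ i, β i, ⟪u i (s i), u k (s k)⟫ = 0 :=
    sum_pi_apply_apply_eq_zero hki (fun x y => ⟪u i x, u k y⟫) fun y => by
      rw [← sum_inner, hu, inner_zero_left]
  have diag (i : ι) : ∑ s : ∀ i, β i, ⟪u i (s i), u i (s i)⟫ =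
      ((card (∀ i, β i) : ℝ) / card (β i)) * ∑ j, ‖u i j‖ ^ 2 := by
    simp_rw [real_inner_self_eq_norm_sq]
    exact sum_pi_apply_eq_card_div_smul i fun j => ‖u i j‖ ^ 2
  calc ∑ s : ∀ i, β i, ‖b + ∑ i, u i (s i)‖ ^ 2
      = ∑ s : ∀ i, β i, (‖b‖ ^ 2 + 2 * ∑ i, ⟪b, u i (s i)⟫ +
          ∑ i, ∑ k, ⟪u i (s i), u k (s k)⟫) := by
        simp_rw [norm_add_sq_real, inner_sum, ← real_inner_self_eq_norm_sq (∑ i, _), sum_inner,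
          inner_sum]
    _ = card (∀ i, β i) * ‖b‖ ^ 2 + 2 * ∑ i, ∑ s : ∀ i, β i, ⟪b, u i (s i)⟫ +
          ∑ i, ∑ k, ∑ s : ∀ i, β i, ⟪u i (s i), u k (s k)⟫ := by
        simp only [Finset.sum_add_distrib, ← Finset.mul_sum, Finset.sum_const, Finset.card_univ,
          nsmul_eq_mul]
        congr 2
        · rw [Finset.sum_comm]
        · rw [Finset.sum_comm]
          exact Finset.sum_congr rfl fun i _ => Finset.sum_comm
    _ = _ := by
        simp only [linear, Finset.sum_const_zero, mul_zero, add_zero]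
        congr 1
        refine Finset.sum_congr rfl fun i _ => ?_
        rw [Finset.sum_eq_single i (fun k _ hki => cross i k hki) (by simp), diag]

end PiSum

theorem Fintype.sum_sub_inv_card_smul_sum_eq_zero {V κ : Type*} [AddCommGroup V] [Module ℝ V]
    [Fintype κ] [Nonempty κ] (a : κ → V) : ∑ j, (a j - (card κ : ℝ)⁻¹ • ∑ k, a k) = 0 := by
  rw [Finset.sum_sub_distrib, Finset.sum_const, Finset.card_univ, ← Nat.cast_smul_eq_nsmul ℝ,
    smul_smul, mul_inv_cancel₀ (Nat.cast_ne_zero.mpr card_ne_zero), one_smul, sub_self]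

theorem gradient_const_mul_sum {V κ : Type*} [NormedAddCommGroup V] [InnerProductSpace ℝ V]
    [CompleteSpace V] [Fintype κ] {g : κ → V → ℝ} {z : V}
    (hg : ∀ j, DifferentiableAt ℝ (g j) z) (c : ℝ) :
    gradient (fun w => c * ∑ j, g j w) z = c • ∑ j, gradient (g j) z := by
  have hfderiv : fderiv ℝ (fun w => c * ∑ j, g j w) z = c • ∑ j, fderiv ℝ (g j) z := by
    rw [fderiv_const_mul (DifferentiableAt.fun_sum fun j _ => hg j) c,
      fderiv_fun_sum fun j _ => hg j]
  simp only [gradient, hfderiv, map_smul, map_sum]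

theorem svrg_expected_descent_decomposition_general {n p : ℕ}
    (m : Fin n → ℕ) (hm : ∀ i, 0 < m i)
    (f : (i : Fin n) → Fin (m i) → EuclideanSpace ℝ (Fin p) → ℝ)
    (hdiff : ∀ i j, Differentiable ℝ (f i j))
    (x x0 : Fin n → EuclideanSpace ℝ (Fin p))
    (α : ℝ) (xstar : EuclideanSpace ℝ (Fin p)) :
    let fi : Fin n → EuclideanSpace ℝ (Fin p) → ℝ :=
      fun i z => (1 / (m i : ℝ)) * ∑ j, f i j z
    let F : EuclideanSpace ℝ (Fin p) → ℝ := fun z => (1 / (n : ℝ)) * ∑ i, fi i z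
    let v : (i : Fin n) → Fin (m i) → EuclideanSpace ℝ (Fin p) :=
      fun i j => gradient (f i j) (x i) - gradient (f i j) (x0 i) +
        gradient (fi i) (x0 i)
    let xbar : EuclideanSpace ℝ (Fin p) := (1 / (n : ℝ)) • ∑ i, x i
    let ybar : ((i : Fin n) → Fin (m i)) → EuclideanSpace ℝ (Fin p) :=
      fun s => (1 / (n : ℝ)) • ∑ i, v i (s i)
    let h : EuclideanSpace ℝ (Fin p) := (1 / (n : ℝ)) • ∑ i, gradient (fi i) (x i)
    (1 / (Fintype.card ((i : Fin n) → Fin (m i)) : ℝ)) *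
        ∑ s : (i : Fin n) → Fin (m i), ‖xbar - α • ybar s - xstar‖ ^ 2 =
      ‖xbar - α • gradient F xbar - xstar‖ ^ 2 +
        2 * α * ⟪xbar - α • gradient F xbar - xstar, gradient F xbar - h⟫ +
        α ^ 2 * ‖gradient F xbar - h‖ ^ 2 +
        (α ^ 2 / (n : ℝ) ^ 2) *
          ∑ i, (1 / (m i : ℝ)) * ∑ j, ‖v i j - gradient (fi i) (x i)‖ ^ 2 := by
  intro fi F v xbar ybar h
  have : ∀ i, NeZero (m i) := fun i => ⟨(hm i).ne'⟩
  set u := fun i j => v i j - gradient (fi i) (x i)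
  have hu (i : Fin n) : ∑ j, u i j = 0 := by
    have hgrad (z) : gradient (fi i) z = (1 / (m i : ℝ)) • ∑ j, gradient (f i j) z :=
      gradient_const_mul_sum (fun j => (hdiff i j).differentiableAt) _
    convert Fintype.sum_sub_inv_card_smul_sum_eq_zero
      fun j => gradient (f i j) (x i) - gradient (f i j) (x0 i) using 2 with j
    simp only [u, v, hgrad, Fintype.card_fin, Finset.sum_sub_distrib, one_div]
    module
  have hstep (s : ∀ i, Fin (m i)) :
      xbar - α • ybar s - xstar = (xbar - α • h - xstar) + ∑ i, (-(α / n)) • u i (s i) := by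
    simp only [ybar, h, u, ← Finset.smul_sum, Finset.sum_sub_distrib]
    module
  have hrecenter : xbar - α • h - xstar =
      (xbar - α • gradient F xbar - xstar) + α • (gradient F xbar - h) := by module
  have hcard : (Fintype.card (∀ i, Fin (m i)) : ℝ) ≠ 0 := Nat.cast_ne_zero.mpr Fintype.card_ne_zero
  simp only [hstep]
  rw [Fintype.sum_pi_norm_add_sum_apply_sq _ (fun i j => (-(α / n)) • u i j)
      fun i => by rw [← Finset.smul_sum, hu, smul_zero],
    mul_add, ← mul_assoc, one_div_mul_cancel hcard, one_mul, Finset.mul_sum, Finset.mul_sum]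
  congr 1
  · rw [hrecenter, norm_add_sq_real, real_inner_smul_right, norm_smul, mul_pow, Real.norm_eq_abs,
      sq_abs]
    ring
  · refine Finset.sum_congr rfl fun i _ => ?_
    simp only [norm_smul, norm_neg, mul_pow, Real.norm_eq_abs, sq_abs, Fintype.card_fin,
      ← Finset.mul_sum, u]
    field_simp

/-- Exact decomposition of the expected squared distance to a reference point
after one inexact (SVRG) descent step, the expectation being the uniform average
over the independent sample indices of all nodes. -/
theorem svrg_expected_descent_decomposition {n p : ℕ} (hn : 0 < n)
    (m : Fin n → ℕ) (hm : ∀ i, 0 < m i) (L : ℝ)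
    (f : (i : Fin n) → Fin (m i) → EuclideanSpace ℝ (Fin p) → ℝ)
    (hdiff : ∀ i j, Differentiable ℝ (f i j))
    (hsmooth : ∀ i j x y, ‖gradient (f i j) x - gradient (f i j) y‖ ≤ L * ‖x - y‖)
    (x x0 : Fin n → EuclideanSpace ℝ (Fin p))
    (α : ℝ) (xstar : EuclideanSpace ℝ (Fin p)) :
    let fi : Fin n → EuclideanSpace ℝ (Fin p) → ℝ :=
      fun i z => (1 / (m i : ℝ)) * ∑ j, f i j z
    let F : EuclideanSpace ℝ (Fin p) → ℝ := fun z => (1 / (n : ℝ)) * ∑ i, fi i z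
    let v : (i : Fin n) → Fin (m i) → EuclideanSpace ℝ (Fin p) :=
      fun i j => gradient (f i j) (x i) - gradient (f i j) (x0 i) +
        gradient (fi i) (x0 i)
    let xbar : EuclideanSpace ℝ (Fin p) := (1 / (n : ℝ)) • ∑ i, x i
    let ybar : ((i : Fin n) → Fin (m i)) → EuclideanSpace ℝ (Fin p) :=
      fun s => (1 / (n : ℝ)) • ∑ i, v i (s i)
    let h : EuclideanSpace ℝ (Fin p) := (1 / (n : ℝ)) • ∑ i, gradient (fi i) (x i)
    (1 / (Fintype.card ((i : Fin n) → Fin (m i)) : ℝ)) *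
        ∑ s : (i : Fin n) → Fin (m i), ‖xbar - α • ybar s - xstar‖ ^ 2 =
      ‖xbar - α • gradient F xbar - xstar‖ ^ 2 +
        2 * α * ⟪xbar - α • gradient F xbar - xstar, gradient F xbar - h⟫ +
        α ^ 2 * ‖gradient F xbar - h‖ ^ 2 +
        (α ^ 2 / (n : ℝ) ^ 2) *
          ∑ i, (1 / (m i : ℝ)) * ∑ j, ‖v i j - gradient (fi i) (x i)‖ ^ 2 :=
  svrg_expected_descent_decomposition_general m hm f hdiff x x0 α xstar
end

section
/- Let f_1,…,f_n : ℝ^p → ℝ be differentiable and L-smooth, and let x⋆ ∈ ℝ^p satisfy ∑_{i=1}^n ∇f_i(x⋆) = 0. Let x, y, v ∈ (ℝ^p)^n be n-tuples with averages x̄ := (1/n)∑_i x_i, ȳ := (1/n)∑_i y_i, v̄ := (1/n)∑_i v_i, and suppose ȳ = v̄. Then, with h := (1/n)∑_{i=1}^n ∇f_i(x_i), one has ∑_{i=1}^n ‖y_i‖² ≤ 4∑_{i=1}^n ‖y_i − ȳ‖² + 4L²∑_{i=1}^n ‖x_i − x̄‖² + 4nL²‖x̄ − x⋆‖² + 4n‖v̄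 − h‖². -/
/-!
Let `g` be the average of the local gradients at `x̄`. Since `ȳ = v̄`, each tracker splits as
`yᵢ = (yᵢ - ȳ) + (v̄ - h) + (h - g) + g`, whence
`‖yᵢ‖² ≤ 4 (‖yᵢ - ȳ‖² + ‖v̄ - h‖² + ‖h - g‖² + ‖g‖²)`. Both `h - g` and `g` are averages of
gradient differences (for `g` because `∑ ∇fᵢ(x⋆) = 0`), so Cauchy–Schwarz and `L`-smoothness
bound `n ‖h - g‖²` by `L² ∑ ‖xᵢ - x̄‖²` and `n ‖g‖²` by `n L² ‖x̄ - x⋆‖²`.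
-/

open Finset

section Seminormed

variable {ι E : Type*} [SeminormedAddCommGroup E]

theorem norm_sum_sq_le_card_mul_sum_norm_sq (s : Finset ι) (w : ι → E) :
    ‖∑ i ∈ s, w i‖ ^ 2 ≤ #s * ∑ i ∈ s, ‖w i‖ ^ 2 :=
  calc ‖∑ i ∈ s, w i‖ ^ 2 ≤ (∑ i ∈ s, ‖w i‖) ^ 2 :=
        pow_le_pow_left₀ (norm_nonneg _) (norm_sum_le _ _) 2
    _ ≤ #s * ∑ i ∈ s, ‖w i‖ ^ 2 := sq_sum_le_card_mul_sum_sq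

theorem norm_add_add_add_sq_le (a b c d : E) :
    ‖a + b + c + d‖ ^ 2 ≤ 4 * (‖a‖ ^ 2 + ‖b‖ ^ 2 + ‖c‖ ^ 2 + ‖d‖ ^ 2) := by
  simpa [Fin.sum_univ_four, add_assoc] using
    norm_sum_sq_le_card_mul_sum_norm_sq univ ![a, b, c, d]

theorem sum_norm_add_add_add_sq_le (s : Finset ι) (u : ι → E) (a b c : E) :
    ∑ i ∈ s, ‖u i + a + b + c‖ ^ 2 ≤
      4 * ∑ i ∈ s, ‖u i‖ ^ 2 + 4 * #s * ‖a‖ ^ 2 + 4 * #s * ‖b‖ ^ 2 + 4 * #s * ‖c‖ ^ 2 :=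
  calc ∑ i ∈ s, ‖u i + a + b + c‖ ^ 2
      ≤ ∑ i ∈ s, 4 * (‖u i‖ ^ 2 + ‖a‖ ^ 2 + ‖b‖ ^ 2 + ‖c‖ ^ 2) :=
        sum_le_sum fun i _ => norm_add_add_add_sq_le _ _ _ _
    _ = _ := by simp only [← mul_sum, sum_add_distrib, sum_const, nsmul_eq_mul]; ring

end Seminormed

section NormedSpace

variable {ι E F : Type*} [SeminormedAddCommGroup E] [SeminormedAddCommGroup F]
  [NormedSpace ℝ F]

theorem card_mul_norm_average_sq_le (s : Finset ι) (w : ι → F) :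
    (#s : ℝ) * ‖(1 / (#s : ℝ)) • ∑ i ∈ s, w i‖ ^ 2 ≤ ∑ i ∈ s, ‖w i‖ ^ 2 := by
  rcases s.eq_empty_or_nonempty with rfl | hs
  · simp
  have hcard : (0 : ℝ) < #s := by exact_mod_cast hs.card_pos
  rw [norm_smul, mul_pow, norm_div, norm_one, Real.norm_natCast]
  calc (#s : ℝ) * ((1 / #s) ^ 2 * ‖∑ i ∈ s, w i‖ ^ 2)
      ≤ #s * ((1 / #s) ^ 2 * (#s * ∑ i ∈ s, ‖w i‖ ^ 2)) := by
        gcongr; exact norm_sum_sq_le_card_mul_sum_norm_sq s w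
    _ = ∑ i ∈ s, ‖w i‖ ^ 2 := by field_simp

theorem card_mul_norm_average_sub_sq_le_of_lipschitz {L : ℝ} (s : Finset ι) (G : ι → E → F)
    (hG : ∀ i a b, ‖G i a - G i b‖ ≤ L * ‖a - b‖) (a b : ι → E) :
    (#s : ℝ) * ‖(1 / (#s : ℝ)) • ∑ i ∈ s, (G i (a i) - G i (b i))‖ ^ 2 ≤
      L ^ 2 * ∑ i ∈ s, ‖a i - b i‖ ^ 2 := by
  refine (card_mul_norm_average_sq_le s _).trans ?_
  rw [mul_sum]
  refine sum_le_sum fun i _ => ?_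
  rw [← mul_pow]
  exact pow_le_pow_left₀ (norm_nonneg _) (hG i (a i) (b i)) 2

end NormedSpace

theorem tracker_norm_bound_general {n p : ℕ}
    (L : ℝ) (f : Fin n → EuclideanSpace ℝ (Fin p) → ℝ)
    (hsmooth : ∀ i x y, ‖gradient (f i) x - gradient (f i) y‖ ≤ L * ‖x - y‖)
    (xstar : EuclideanSpace ℝ (Fin p))
    (hstar : ∑ i, gradient (f i) xstar = 0)
    (x y v : Fin n → EuclideanSpace ℝ (Fin p)) :
    let xbar : EuclideanSpace ℝ (Fin p) := (1 / (n : ℝ)) • ∑ i, x i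
    let ybar : EuclideanSpace ℝ (Fin p) := (1 / (n : ℝ)) • ∑ i, y i
    let vbar : EuclideanSpace ℝ (Fin p) := (1 / (n : ℝ)) • ∑ i, v i
    let h : EuclideanSpace ℝ (Fin p) := (1 / (n : ℝ)) • ∑ i, gradient (f i) (x i)
    ybar = vbar →
      ∑ i, ‖y i‖ ^ 2 ≤
        4 * ∑ i, ‖y i - ybar‖ ^ 2 + 4 * L ^ 2 * ∑ i, ‖x i - xbar‖ ^ 2 +
          4 * (n : ℝ) * L ^ 2 * ‖xbar - xstar‖ ^ 2 +
          4 * (n : ℝ) * ‖vbar - h‖ ^ 2 := by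
  intro xbar ybar vbar h hyv
  set g : EuclideanSpace ℝ (Fin p) := (1 / (n : ℝ)) • ∑ i, gradient (f i) xbar
  have hconsensus : (n : ℝ) * ‖h - g‖ ^ 2 ≤ L ^ 2 * ∑ i, ‖x i - xbar‖ ^ 2 := by
    have := card_mul_norm_average_sub_sq_le_of_lipschitz univ _ hsmooth x fun _ => xbar
    rwa [card_univ, Fintype.card_fin, sum_sub_distrib, smul_sub] at this
  have hoptimality : (n : ℝ) * ‖g‖ ^ 2 ≤ L ^ 2 * (n * ‖xbar - xstar‖ ^ 2) := by
    have :=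
      card_mul_norm_average_sub_sq_le_of_lipschitz univ _ hsmooth (fun _ => xbar) fun _ => xstar
    rwa [card_univ, Fintype.card_fin, sum_sub_distrib, hstar, sub_zero, sum_const, card_univ,
      Fintype.card_fin, nsmul_eq_mul] at this
  have hsplit : ∑ i, ‖y i‖ ^ 2 = ∑ i, ‖(y i - ybar) + (vbar - h) + (h - g) + g‖ ^ 2 :=
    sum_congr rfl fun i _ => by rw [← hyv]; abel_nf
  have htracker := sum_norm_add_add_add_sq_le univ (fun i => y i - ybar) (vbar - h) (h - g) g
  rw [card_univ, Fintype.card_fin, ← hsplit] at htracker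
  linarith

/-- Bound on the total norm of the gradient trackers in terms of tracking error,
consensus error, optimality gap and gradient-estimation variance. -/
theorem tracker_norm_bound {n p : ℕ}
    (L : ℝ) (f : Fin n → EuclideanSpace ℝ (Fin p) → ℝ)
    (hdiff : ∀ i, Differentiable ℝ (f i))
    (hsmooth : ∀ i x y, ‖gradient (f i) x - gradient (f i) y‖ ≤ L * ‖x - y‖)
    (xstar : EuclideanSpace ℝ (Fin p))
    (hstar : ∑ i, gradient (f i) xstar = 0)
    (x y v : Fin n → EuclideanSpace ℝ (Fin p)) :
    let xbar : EuclideanSpace ℝ (Fin p) := (1 / (n : ℝ)) • ∑ i, x i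
    let ybar : EuclideanSpace ℝ (Fin p) := (1 / (n : ℝ)) • ∑ i, y i
    let vbar : EuclideanSpace ℝ (Fin p) := (1 / (n : ℝ)) • ∑ i, v i
    let h : EuclideanSpace ℝ (Fin p) := (1 / (n : ℝ)) • ∑ i, gradient (f i) (x i)
    ybar = vbar →
      ∑ i, ‖y i‖ ^ 2 ≤
        4 * ∑ i, ‖y i - ybar‖ ^ 2 + 4 * L ^ 2 * ∑ i, ‖x i - xbar‖ ^ 2 +
          4 * (n : ℝ) * L ^ 2 * ‖xbar - xstar‖ ^ 2 +
          4 * (n : ℝ) * ‖vbar - h‖ ^ 2 :=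
  tracker_norm_bound_general L f hsmooth xstar hstar x y v
end

section
/- Let α := (1−σ²)²/(200·Q·L). Then the spectral radius of G_α satisfies ρ(G_α) ≤ 1 − (1−σ²)²/(800·Q²). -/
/-- The spectral radius of a real square matrix: the maximum modulus of its
complex eigenvalues. -/
noncomputable def specRad {d : ℕ} (A : Matrix (Fin d) (Fin d) ℝ) : ℝ :=
  sSup ((fun z : ℂ => ‖z‖) '' spectrum ℂ (A.map Complex.ofReal))

/-- The matrix `G_α` governing the inner-loop dynamics of GT-SVRG. -/
noncomputable def Gmat (L μ σ α : ℝ) : Matrix (Fin 3) (Fin 3) ℝ :=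
  !![(1 + σ ^ 2) / 2, 0, 2 * α ^ 2 / (1 - σ ^ 2);
     2 * L ^ 2 * α / μ, 1 - μ * α / 2, 0;
     100 * L ^ 2 / (1 - σ ^ 2), 70 * L ^ 2 / (1 - σ ^ 2),
       (1 + σ ^ 2) / 2 + 40 * L ^ 2 * α ^ 2 / (1 - σ ^ 2)]

/-!
If `w` is a positive vector with `∑ⱼ |Aᵢⱼ| wⱼ ≤ θ wᵢ` for every row `i`, then every complex
eigenvalue `z` of `A` has `|z| ≤ θ`: at a coordinate `i` of an eigenvector `v` maximizing
`|vᵢ| / wᵢ`, the `i`-th row of `A v = z v` gives `|z| |vᵢ| ≤ θ |vᵢ|`. Writing `s = 1 - σ²` and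
`Q = L / μ`, the weights `(1, 8Q², 3000 Q² L² / s²)` make all three row inequalities hold for
`G_α` with `θ = 1 - s² / (800 Q²)`; the second one with equality.
-/

open Finset Matrix

section WeightedRowSums

variable {𝕜 n : Type*} [Fintype n]

theorem norm_le_of_mulVec_eq_smul [NormedField 𝕜] {B : Matrix n n 𝕜} {v : n → 𝕜} {z : 𝕜}
    (hv : v ≠ 0) (hBv : B *ᵥ v = z • v) {w : n → ℝ} {θ : ℝ} (hw : ∀ i, 0 < w i)
    (h : ∀ i, ∑ j, ‖B i j‖ * w j ≤ θ * w i) : ‖z‖ ≤ θ := by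
  obtain ⟨j₀, hj₀⟩ := Function.ne_iff.mp hv
  obtain ⟨i, -, hi⟩ := exists_max_image univ (fun j => ‖v j‖ / w j) ⟨j₀, mem_univ j₀⟩
  set c := ‖v i‖ / w i
  have hc : 0 < c := (div_pos (norm_pos_iff.mpr hj₀) (hw j₀)).trans_le (hi j₀ (mem_univ j₀))
  have hvc : ∀ j, ‖v j‖ ≤ c * w j := fun j =>
    (div_le_iff₀ (hw j)).mp (hi j (mem_univ j))
  have key : ‖z‖ * (c * w i) ≤ θ * (c * w i) :=
    calc ‖z‖ * (c * w i) = ‖z * v i‖ := by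
          rw [norm_mul, show c * w i = ‖v i‖ from div_mul_cancel₀ _ (hw i).ne']
      _ = ‖∑ j, B i j * v j‖ := by
          rw [← smul_eq_mul, ← Pi.smul_apply, ← hBv]; rfl
      _ ≤ ∑ j, ‖B i j‖ * (c * w j) := by
          refine (norm_sum_le _ _).trans (sum_le_sum fun j _ => ?_)
          rw [norm_mul]
          exact mul_le_mul_of_nonneg_left (hvc j) (norm_nonneg _)
      _ = c * ∑ j, ‖B i j‖ * w j := by
          rw [mul_sum]; exact sum_congr rfl fun j _ => by ring
      _ ≤ c * (θ * w i) := mul_le_mul_of_nonneg_left (h i) hc.le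
      _ = θ * (c * w i) := by ring
  exact le_of_mul_le_mul_right key (mul_pos hc (hw i))

theorem norm_le_of_mem_spectrum [NormedField 𝕜] [DecidableEq n] {B : Matrix n n 𝕜} {z : 𝕜}
    (hz : z ∈ spectrum 𝕜 B) {w : n → ℝ} {θ : ℝ} (hw : ∀ i, 0 < w i)
    (h : ∀ i, ∑ j, ‖B i j‖ * w j ≤ θ * w i) : ‖z‖ ≤ θ := by
  rw [← Matrix.spectrum_toLin', ← Module.End.hasEigenvalue_iff_mem_spectrum] at hz
  obtain ⟨v, hv, hv0⟩ := hz.exists_hasEigenvector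
  exact norm_le_of_mulVec_eq_smul hv0 (Module.End.mem_eigenspace_iff.mp hv) hw h

theorem specRad_le_of_weighted_row_sum_le {d : ℕ} [NeZero d] {A : Matrix (Fin d) (Fin d) ℝ}
    {w : Fin d → ℝ} {θ : ℝ} (hw : ∀ i, 0 < w i) (h : ∀ i, ∑ j, |A i j| * w j ≤ θ * w i) :
    specRad A ≤ θ := by
  have hθ : 0 ≤ θ := nonneg_of_mul_nonneg_left
    ((sum_nonneg fun j _ => mul_nonneg (abs_nonneg _) (hw j).le).trans (h 0)) (hw 0)
  refine Real.sSup_le ?_ hθ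
  rintro _ ⟨z, hz, rfl⟩
  refine norm_le_of_mem_spectrum hz hw fun i => ?_
  simpa only [Matrix.map_apply, Complex.norm_real, Real.norm_eq_abs] using h i

end WeightedRowSums

noncomputable def reducedGmat (s Q L : ℝ) : Matrix (Fin 3) (Fin 3) ℝ :=
  !![1 - s / 2, 0, s ^ 3 / (20000 * Q ^ 2 * L ^ 2);
     s ^ 2 / 100, 1 - s ^ 2 / (400 * Q ^ 2), 0;
     100 * L ^ 2 / s, 70 * L ^ 2 / s, 1 - s / 2 + s ^ 3 / (1000 * Q ^ 2)]

theorem Gmat_eq_reducedGmat {L μ σ : ℝ} (hL : L ≠ 0) (hμ : μ ≠ 0) (hσ : 1 - σ ^ 2 ≠ 0) :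
    Gmat L μ σ ((1 - σ ^ 2) ^ 2 / (200 * (L / μ) * L)) = reducedGmat (1 - σ ^ 2) (L / μ) L := by
  ext i j
  fin_cases i <;> fin_cases j <;> simp [Gmat, reducedGmat] <;> field_simp <;> ring

section reducedGmat

variable {s Q L : ℝ} (hs₀ : 0 < s) (hs₁ : s ≤ 1) (hQ : 1 ≤ Q)
include hs₀ hs₁ hQ

theorem reducedGmat_nonneg (i j : Fin 3) : 0 ≤ reducedGmat s Q L i j := by
  have : s ^ 2 / (400 * Q ^ 2) ≤ 1 := by
    rw [div_le_one (by positivity)]; nlinarith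
  have : 0 ≤ s ^ 3 / (1000 * Q ^ 2) := by positivity
  fin_cases i <;> fin_cases j <;> simp [reducedGmat] <;> first | positivity | linarith

theorem specRad_reducedGmat_le (hL : L ≠ 0) :
    specRad (reducedGmat s Q L) ≤ 1 - s ^ 2 / (800 * Q ^ 2) := by
  refine specRad_le_of_weighted_row_sum_le (w := ![1, 8 * Q ^ 2, 3000 * Q ^ 2 * L ^ 2 / s ^ 2])
    (fun i => by fin_cases i <;> simp <;> positivity) fun i => ?_
  simp only [abs_of_nonneg (reducedGmat_nonneg hs₀ hs₁ hQ _ _), Fin.sum_univ_three]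
  have hQ₀ : 0 < Q := one_pos.trans_le hQ
  fin_cases i <;> simp only [reducedGmat, Fin.isValue, Fin.zero_eta, Fin.mk_one, Fin.reduceFinMk,
    of_apply, Matrix.cons_val, mul_one, zero_mul, add_zero]
  · calc 1 - s / 2 + s ^ 3 / (20000 * Q ^ 2 * L ^ 2) * (3000 * Q ^ 2 * L ^ 2 / s ^ 2)
        _ = 1 - 7 / 20 * s := by field_simp; ring
        _ ≤ 1 - s ^ 2 / (800 * Q ^ 2) := by
          rw [sub_le_sub_iff_left, div_le_iff₀ (by positivity)]
          nlinarith [mul_le_mul_of_nonneg_left hs₁ hs₀.le,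
            mul_le_mul_of_nonneg_left (one_le_pow₀ hQ : 1 ≤ Q ^ 2) hs₀.le]
  · exact le_of_eq (by field_simp; ring)
  · rw [← sub_nonneg]
    have hgap : (1 - s ^ 2 / (800 * Q ^ 2)) * (3000 * Q ^ 2 * L ^ 2 / s ^ 2) - (100 * L ^ 2 / s +
        70 * L ^ 2 / s * (8 * Q ^ 2) + (1 - s / 2 + s ^ 3 / (1000 * Q ^ 2)) *
        (3000 * Q ^ 2 * L ^ 2 / s ^ 2)) =
        L ^ 2 / s * (940 * Q ^ 2 - 100 - 3 * s ^ 2 - 15 / 4 * s) := by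
      field_simp; ring
    rw [hgap]
    exact mul_nonneg (by positivity) (by nlinarith)

end reducedGmat

/-- With `α = (1−σ²)²/(200·Q·L)` and `Q = L/μ`,
`ρ(G_α) ≤ 1 − (1−σ²)²/(800·Q²)`. -/
theorem specRad_Gmat_bound (L μ σ : ℝ)
    (hμ : 0 < μ) (hμL : μ ≤ L) (hσ0 : 0 < σ) (hσ1 : σ < 1) :
    specRad (Gmat L μ σ ((1 - σ ^ 2) ^ 2 / (200 * (L / μ) * L))) ≤
      1 - (1 - σ ^ 2) ^ 2 / (800 * (L / μ) ^ 2) := by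
  have hL : 0 < L := hμ.trans_le hμL
  have hs₀ : 0 < 1 - σ ^ 2 := by nlinarith
  rw [Gmat_eq_reducedGmat hL.ne' hμ.ne' hs₀.ne']
  exact specRad_reducedGmat_le hs₀ (by nlinarith) ((one_le_div hμ).mpr hμL) hL.ne'
end

section
/- Let α := (1−σ²)²/(200·Q·L). Then there exists K₀ ∈ ℕ such that for every K ≥ K₀ the spectral radius of G_α^K + (I₃ − G_α)⁻¹H_α satisfies ρ(G_α^K + (I₃ − G_α)⁻¹H_α) ≤ 0.9. -/
/-- The matrix `H_α` acting on the initial conditions of each inner loop. -/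
noncomputable def Hmat (L μ σ α : ℝ) : Matrix (Fin 3) (Fin 3) ℝ :=
  !![0, 0, 0;
     4 * L ^ 2 * α ^ 2, 4 * L ^ 2 * α ^ 2, 0;
     60 * L ^ 2 / (1 - σ ^ 2), 60 * L ^ 2 / (1 - σ ^ 2), 0]

open Matrix

attribute [local instance] Matrix.linftyOpNormedAddCommGroup Matrix.linftyOpNormedRing
  Matrix.linftyOpNormedAlgebra

lemma specRad_units_conj {d : ℕ} (u : (Matrix (Fin d) (Fin d) ℝ)ˣ)
    (A : Matrix (Fin d) (Fin d) ℝ) :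
    specRad ((↑u⁻¹ : Matrix (Fin d) (Fin d) ℝ) * A * (u : Matrix (Fin d) (Fin d) ℝ))
      = specRad A := by
  let U := Units.map (Complex.ofRealHom.mapMatrix : Matrix (Fin d) (Fin d) ℝ →+* _).toMonoidHom u
  have hmap : ((↑u⁻¹ : Matrix (Fin d) (Fin d) ℝ) * A * (u : Matrix (Fin d) (Fin d) ℝ)).map
      Complex.ofReal = (↑U⁻¹ : Matrix (Fin d) (Fin d) ℂ) * A.map Complex.ofReal * U := by
    change Complex.ofRealHom.mapMatrix _ = _
    simp only [map_mul]
    rfl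
  rw [specRad, specRad, hmap, spectrum.units_conjugate']

lemma linfty_opNorm_map_ofReal {m n : Type*} [Fintype m] [Fintype n] (A : Matrix m n ℝ) :
    ‖A.map Complex.ofReal‖ = ‖A‖ := by
  simp [linfty_opNorm_def, Matrix.map_apply]

lemma specRad_le_linfty_opNorm {d : ℕ} (A : Matrix (Fin d) (Fin d) ℝ) : specRad A ≤ ‖A‖ := by
  refine Real.sSup_le ?_ (norm_nonneg _)
  rintro _ ⟨z, hz, rfl⟩
  rcases isEmpty_or_nonempty (Fin d) with hd | hd
  · simp [spectrum.of_subsingleton] at hz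
  · exact (spectrum.norm_le_norm_of_mem hz).trans (linfty_opNorm_map_ofReal A).le

section WeightedRowSums

variable {n : Type*} [Fintype n] [DecidableEq n] {w : n → ℝ}

lemma linfty_opNorm_diagonal_conj_le (hw : ∀ i, 0 < w i) {A : Matrix n n ℝ} {r : ℝ}
    (hr : 0 ≤ r) (h : ∀ i, ∑ j, |A i j| * w j ≤ r * w i) :
    ‖diagonal w⁻¹ * A * diagonal w‖ ≤ r := by
  rw [linfty_opNorm_def, ← Real.coe_toNNReal r hr, NNReal.coe_le_coe]
  refine Finset.sup_le fun i _ => ?_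
  rw [← NNReal.coe_le_coe, Real.coe_toNNReal _ hr, NNReal.coe_sum]
  simp only [diagonal_mul, mul_diagonal, coe_nnnorm, Real.norm_eq_abs, Pi.inv_apply, abs_mul,
    abs_inv, abs_of_pos (hw _), mul_assoc, ← Finset.mul_sum]
  exact (inv_mul_le_iff₀ (hw i)).2 ((h i).trans_eq (mul_comm _ _))

noncomputable def diagonalUnit (hw : ∀ i, w i ≠ 0) : (Matrix n n ℝ)ˣ :=
  ⟨diagonal w, diagonal w⁻¹, by simp [diagonal_mul_diagonal, hw],
    by simp [diagonal_mul_diagonal, hw]⟩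

lemma isUnit_one_sub_of_rowSum_le (hw : ∀ i, 0 < w i) {G : Matrix n n ℝ} {c : ℝ} (hc₀ : 0 ≤ c)
    (hc₁ : c < 1) (hG : ∀ i, ∑ j, |G i j| * w j ≤ c * w i) : IsUnit (1 - G) := by
  let u := diagonalUnit fun i => (hw i).ne'
  have hconj : IsUnit ((↑u⁻¹ : Matrix n n ℝ) * (1 - G) * (u : Matrix n n ℝ)) := by
    rw [mul_sub, sub_mul, mul_one, Units.inv_mul]
    exact (Units.oneSub _ ((linfty_opNorm_diagonal_conj_le hw hc₀ hG).trans_lt hc₁)).isUnit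
  simpa [mul_assoc] using (u.isUnit.mul hconj).mul u⁻¹.isUnit

lemma specRad_pow_add_le {d : ℕ} {w : Fin d → ℝ} (hw : ∀ i, 0 < w i)
    {G B : Matrix (Fin d) (Fin d) ℝ} {c b : ℝ} (hc : 0 ≤ c) (hb : 0 ≤ b)
    (hG : ∀ i, ∑ j, |G i j| * w j ≤ c * w i) (hB : ∀ i, ∑ j, |B i j| * w j ≤ b * w i)
    {K : ℕ} (hK : K ≠ 0) : specRad (G ^ K + B) ≤ c ^ K + b := by
  let u := diagonalUnit fun i => (hw i).ne'
  rw [← specRad_units_conj u, mul_add, add_mul, ← Units.conj_pow']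
  calc _ ≤ _ := specRad_le_linfty_opNorm _
    _ ≤ ‖diagonal w⁻¹ * G * diagonal w‖ ^ K + ‖diagonal w⁻¹ * B * diagonal w‖ :=
      (norm_add_le _ _).trans (add_le_add (norm_pow_le' _ (Nat.pos_of_ne_zero hK)) le_rfl)
    _ ≤ c ^ K + b := add_le_add
      (pow_le_pow_left₀ (norm_nonneg _) (linfty_opNorm_diagonal_conj_le hw hc hG) K)
      (linfty_opNorm_diagonal_conj_le hw hb hB)

end WeightedRowSums

noncomputable def stepSize (L μ σ : ℝ) : ℝ := (1 - σ ^ 2) ^ 2 / (200 * (L / μ) * L)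

noncomputable def scaleWeight (L μ σ : ℝ) : Fin 3 → ℝ :=
  ![1, 8 * L ^ 2 / μ ^ 2, 2000 * L ^ 4 / ((1 - σ ^ 2) ^ 2 * μ ^ 2)]

noncomputable def contractionFactor (L μ σ : ℝ) : ℝ := 1 - (1 - σ ^ 2) ^ 2 * μ ^ 2 / (800 * L ^ 2)

/-- The solution `b` of `(I - G) b = h`, where `H = h ⊗ (1, 1, 0)`; its entries share the
denominator `det (I - G)`, up to a positive factor. -/
noncomputable def bvec (L μ σ : ℝ) : Fin 3 → ℝ :=
  ![μ ^ 2 * (150 + 7 * (1 - σ ^ 2) ^ 2) / (25 * (472 * L ^ 2 - (10 + (1 - σ ^ 2) ^ 2) * μ ^ 2)),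
    (600 * L ^ 2 - 10 * (1 - σ ^ 2) ^ 2 * μ ^ 2 + 500 * (1 - σ ^ 2) ^ 2 * L ^ 2
        - (1 - σ ^ 2) ^ 4 * μ ^ 2) / (25 * (472 * L ^ 2 - (10 + (1 - σ ^ 2) ^ 2) * μ ^ 2)),
    400 * L ^ 4 * (150 + 7 * (1 - σ ^ 2) ^ 2)
      / ((1 - σ ^ 2) ^ 2 * (472 * L ^ 2 - (10 + (1 - σ ^ 2) ^ 2) * μ ^ 2))]

lemma stepSize_eq (L μ σ : ℝ) : stepSize L μ σ = (1 - σ ^ 2) ^ 2 * μ / (200 * L ^ 2) := by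
  rw [stepSize, ← div_div_eq_mul_div]
  ring

lemma Hmat_eq_vecMulVec (L μ σ α : ℝ) :
    Hmat L μ σ α = vecMulVec ![0, 4 * L ^ 2 * α ^ 2, 60 * L ^ 2 / (1 - σ ^ 2)] ![1, 1, 0] := by
  ext i j
  fin_cases i <;> fin_cases j <;> simp [Hmat, vecMulVec_apply]

lemma exists_sq_eq_one_sub {σ : ℝ} (hσ₀ : 0 < σ) (hσ₁ : σ < 1) :
    ∃ s, 0 < s ∧ s ≤ 1 ∧ σ ^ 2 = 1 - s :=
  ⟨1 - σ ^ 2, by nlinarith, by nlinarith, by ring⟩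

section Estimates

variable {L μ σ : ℝ} (hμ : 0 < μ) (hμL : μ ≤ L) (hσ₀ : 0 < σ) (hσ₁ : σ < 1)
include hμ hμL hσ₀ hσ₁

lemma scaleWeight_pos (i : Fin 3) : 0 < scaleWeight L μ σ i := by
  obtain ⟨s, hs₀, -, hσs⟩ := exists_sq_eq_one_sub hσ₀ hσ₁
  have hL : 0 < L := hμ.trans_le hμL
  fin_cases i <;>
  · simp only [scaleWeight, hσs, sub_sub_cancel, Fin.isValue, Fin.zero_eta, Fin.mk_one,
      Fin.reduceFinMk, cons_val, cons_val_zero, cons_val_one]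
    positivity

lemma contractionFactor_mem_Ico : contractionFactor L μ σ ∈ Set.Ico 0 1 := by
  obtain ⟨s, hs₀, hs₁, hσs⟩ := exists_sq_eq_one_sub hσ₀ hσ₁
  have hL : 0 < L := hμ.trans_le hμL
  have hμ2 : μ ^ 2 ≤ L ^ 2 := pow_le_pow_left₀ hμ.le hμL 2
  simp only [contractionFactor, hσs, sub_sub_cancel, Set.mem_Ico, sub_nonneg, sub_lt_self_iff]
  refine ⟨(div_le_one (by positivity)).2 ?_, by positivity⟩
  nlinarith [mul_le_mul_of_nonneg_right (pow_le_one₀ hs₀.le hs₁ : s ^ 2 ≤ 1) (sq_nonneg μ)]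

lemma Gmat_nonneg (i j : Fin 3) : 0 ≤ Gmat L μ σ (stepSize L μ σ) i j := by
  obtain ⟨s, hs₀, hs₁, hσs⟩ := exists_sq_eq_one_sub hσ₀ hσ₁
  have hL : 0 < L := hμ.trans_le hμL
  fin_cases i <;> fin_cases j <;>
    simp only [Gmat, stepSize_eq, hσs, sub_sub_cancel, sub_nonneg, le_refl, Fin.isValue,
      Fin.zero_eta, Fin.mk_one, Fin.reduceFinMk, of_apply, cons_val', cons_val, cons_val_zero,
      cons_val_one, cons_val_fin_one] <;>
    try positivity
  field_simp
  nlinarith [pow_le_pow_left₀ hμ.le hμL 2,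
    mul_le_mul_of_nonneg_right (pow_le_one₀ hs₀.le hs₁ : s ^ 2 ≤ 1) (sq_nonneg μ)]

lemma Gmat_rowSum_le (i : Fin 3) :
    ∑ j, |Gmat L μ σ (stepSize L μ σ) i j| * scaleWeight L μ σ j
      ≤ contractionFactor L μ σ * scaleWeight L μ σ i := by
  simp only [abs_of_nonneg (Gmat_nonneg hμ hμL hσ₀ hσ₁ i _)]
  obtain ⟨s, hs₀, hs₁, hσs⟩ := exists_sq_eq_one_sub hσ₀ hσ₁
  have hL : 0 < L := hμ.trans_le hμL
  have hμ2 : μ ^ 2 ≤ L ^ 2 := pow_le_pow_left₀ hμ.le hμL 2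
  have hμs : s * μ ^ 2 ≤ L ^ 2 := by nlinarith
  fin_cases i <;>
    simp only [Gmat, scaleWeight, contractionFactor, stepSize_eq, Fin.sum_univ_three, hσs,
      sub_sub_cancel, mul_one, zero_mul, add_zero, Fin.isValue, Fin.zero_eta, Fin.mk_one,
      Fin.reduceFinMk, of_apply, cons_val', cons_val, cons_val_zero, cons_val_one, cons_val_fin_one]
  · rw [← sub_nonneg]; field_simp; ring_nf; nlinarith [mul_le_mul_of_nonneg_left hμs hs₀.le]
  · rw [← sub_nonneg]; field_simp; ring_nf; nlinarith
  · have hs2 : s ^ 2 * μ ^ 2 ≤ L ^ 2 := by nlinarith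
    have : 0 ≤ 28160 * L ^ 2 - 6400 * μ ^ 2 - 160 * s * μ ^ 2 - 128 * s ^ 2 * μ ^ 2 := by
      nlinarith
    rw [← sub_nonneg]; field_simp; ring_nf
    nlinarith [mul_nonneg (mul_nonneg hs₀.le (sq_nonneg L)) this]

lemma one_sub_Gmat_mulVec_bvec :
    (1 - Gmat L μ σ (stepSize L μ σ)) *ᵥ bvec L μ σ
      = ![0, 4 * L ^ 2 * stepSize L μ σ ^ 2, 60 * L ^ 2 / (1 - σ ^ 2)] := by
  obtain ⟨s, hs₀, hs₁, hσs⟩ := exists_sq_eq_one_sub hσ₀ hσ₁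
  have hL : 0 < L := hμ.trans_le hμL
  have hden : 0 < 472 * L ^ 2 - (10 + s ^ 2) * μ ^ 2 := by
    nlinarith [pow_le_pow_left₀ hμ.le hμL 2,
      mul_le_mul_of_nonneg_right (pow_le_one₀ hs₀.le hs₁ : s ^ 2 ≤ 1) (sq_nonneg μ)]
  ext i
  fin_cases i <;>
    simp only [Gmat, bvec, stepSize_eq, mulVec, dotProduct, Fin.sum_univ_three, Matrix.sub_apply,
      one_apply, hσs, sub_sub_cancel, Nat.succ_eq_add_one, Nat.reduceAdd, ↓reduceIte, zero_ne_one,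
      one_ne_zero, Fin.reduceEq, sub_self, zero_sub, neg_mul, zero_mul, add_zero, Fin.isValue,
      Fin.zero_eta, Fin.mk_one, Fin.reduceFinMk, of_apply, cons_val', cons_val, cons_val_zero,
      cons_val_one, cons_val_fin_one]
  -- `field_simp` clears the determinant factor only once it is an atom known to be nonzero.
  all_goals
    generalize hD : 472 * L ^ 2 - (10 + s ^ 2) * μ ^ 2 = D at hden ⊢
    field_simp
    rw [← hD]
    ring

lemma inv_one_sub_Gmat_mul_Hmat :
    (1 - Gmat L μ σ (stepSize L μ σ))⁻¹ * Hmat L μ σ (stepSize L μ σ)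
      = vecMulVec (bvec L μ σ) ![1, 1, 0] := by
  have hunit := isUnit_one_sub_of_rowSum_le (scaleWeight_pos hμ hμL hσ₀ hσ₁)
    (contractionFactor_mem_Ico hμ hμL hσ₀ hσ₁).1 (contractionFactor_mem_Ico hμ hμL hσ₀ hσ₁).2
    (Gmat_rowSum_le hμ hμL hσ₀ hσ₁)
  rw [Hmat_eq_vecMulVec, mul_vecMulVec, ← one_sub_Gmat_mulVec_bvec hμ hμL hσ₀ hσ₁, mulVec_mulVec,
    nonsing_inv_mul _ ((isUnit_iff_isUnit_det _).mp hunit), one_mulVec]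

lemma vecMulVec_bvec_rowSum_le (i : Fin 3) :
    ∑ j, |vecMulVec (bvec L μ σ) ![1, 1, 0] i j| * scaleWeight L μ σ j
      ≤ 4 / 5 * scaleWeight L μ σ i := by
  obtain ⟨s, hs₀, hs₁, hσs⟩ := exists_sq_eq_one_sub hσ₀ hσ₁
  have hL : 0 < L := hμ.trans_le hμL
  have hμ2 : μ ^ 2 ≤ L ^ 2 := pow_le_pow_left₀ hμ.le hμL 2
  have hs2 : s ^ 2 ≤ 1 := pow_le_one₀ hs₀.le hs₁
  have hs2μ : s ^ 2 * μ ^ 2 ≤ L ^ 2 := by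
    nlinarith [mul_le_mul_of_nonneg_right hs2 (sq_nonneg μ)]
  have hw : μ ^ 2 + 8 * L ^ 2 ≤ 9 * L ^ 2 := by linarith
  have hden : 0 < 461 * L ^ 2 ∧ 461 * L ^ 2 ≤ 472 * L ^ 2 - (10 + s ^ 2) * μ ^ 2 :=
    ⟨by positivity, by linarith⟩
  have hv₀ : 0 ≤ 600 * L ^ 2 - 10 * s ^ 2 * μ ^ 2 + 500 * s ^ 2 * L ^ 2 - s ^ 4 * μ ^ 2 := by
    nlinarith [mul_le_mul_of_nonneg_left hs2μ (sq_nonneg s)]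
  have hv₁ : 600 * L ^ 2 - 10 * s ^ 2 * μ ^ 2 + 500 * s ^ 2 * L ^ 2 - s ^ 4 * μ ^ 2
      ≤ 1100 * L ^ 2 := by
    nlinarith [mul_le_mul_of_nonneg_right hs2 (sq_nonneg L),
      mul_nonneg (sq_nonneg (s ^ 2)) (sq_nonneg μ)]
  have hb : (150 + 7 * s ^ 2) * (μ ^ 2 + 8 * L ^ 2) ≤ 157 * (9 * L ^ 2) :=
    mul_le_mul (by linarith) hw (by positivity) (by norm_num)
  have hvb := mul_le_mul hv₁ hw (by positivity) (by positivity)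
  have hdb := mul_le_mul_of_nonneg_left hden.2 (sq_nonneg L)
  fin_cases i <;>
    simp only [vecMulVec_apply, Fin.sum_univ_three, bvec, scaleWeight, hσs, sub_sub_cancel,
      Nat.succ_eq_add_one, Nat.reduceAdd, abs_mul, abs_one, abs_zero, mul_one, mul_zero, zero_mul,
      add_zero, Fin.isValue, Fin.zero_eta, Fin.mk_one, Fin.reduceFinMk, cons_val, cons_val_zero,
      cons_val_one]
  all_goals
    generalize 472 * L ^ 2 - (10 + s ^ 2) * μ ^ 2 = D at hden hdb ⊢
    have hD₀ : 0 < D := hden.1.trans_le hden.2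
    rw [abs_of_nonneg (by positivity)]
    field_simp
    nlinarith

end Estimates

/-- With `α = (1−σ²)²/(200·Q·L)` and `Q = L/μ`, for all sufficiently large inner
loop lengths `K`, the outer-loop iteration matrix `G_α^K + (I − G_α)⁻¹H_α` has
spectral radius at most `0.9`. -/
theorem specRad_outer_loop_matrix_le (L μ σ : ℝ)
    (hμ : 0 < μ) (hμL : μ ≤ L) (hσ0 : 0 < σ) (hσ1 : σ < 1) :
    let α : ℝ := (1 - σ ^ 2) ^ 2 / (200 * (L / μ) * L)
    ∃ K₀ : ℕ, ∀ K ≥ K₀,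
      specRad (Gmat L μ σ α ^ K + (1 - Gmat L μ σ α)⁻¹ * Hmat L μ σ α) ≤ 0.9 := by
  intro α
  obtain ⟨hc₀, hc₁⟩ := contractionFactor_mem_Ico hμ hμL hσ0 hσ1
  have hB : (1 - Gmat L μ σ α)⁻¹ * Hmat L μ σ α = vecMulVec (bvec L μ σ) ![1, 1, 0] :=
    inv_one_sub_Gmat_mul_Hmat hμ hμL hσ0 hσ1
  obtain ⟨K₀, hK₀⟩ := exists_pow_lt_of_lt_one (show (0 : ℝ) < 1 / 10 by norm_num) hc₁
  refine ⟨K₀ + 1, fun K hK => ?_⟩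
  have hcK : contractionFactor L μ σ ^ K ≤ contractionFactor L μ σ ^ K₀ :=
    pow_le_pow_of_le_one hc₀ hc₁.le (by omega)
  rw [hB]
  calc _ ≤ contractionFactor L μ σ ^ K + 4 / 5 :=
        specRad_pow_add_le (scaleWeight_pos hμ hμL hσ0 hσ1) hc₀ (by norm_num)
          (Gmat_rowSum_le hμ hμL hσ0 hσ1) (vecMulVec_bvec_rowSum_le hμ hμL hσ0 hσ1) (by omega)
    _ ≤ 0.9 := by linarith
end
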